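/- arXiv:2410.17426 — 3 statements merged into one kernel-verified Lean document; each statement's English description precedes it below -/
import Mathlib

section
/- Let f: ℝ → ℝ be given by f(x) = (1/2)σ²x² + 2∫₀^∞ (1 - cos(xs)) ν(ds), where σ ∈ ℝ and ν is a finite positive measure on (0,∞). Then for every integer z and real x, f(z·x) ≤ z²·f(x). -/
open MeasureTheory Real

lemma abs_sin_nat_mul_le (n : ℕ) (t : ℝ) : |Real.sin (n * t)| ≤ n * |Real.sin t| := by
  induction n with
  | zero => simp
  | succ n ih =>
    have h : ((n : ℝ) + 1) * t = n * t + t := by ring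
    push_cast
    rw [h, Real.sin_add]
    have h1 : |Real.sin (n * t) * Real.cos t + Real.cos (n * t) * Real.sin t|
        ≤ |Real.sin (n * t)| * |Real.cos t| + |Real.cos (n * t)| * |Real.sin t| := by
      calc _ ≤ |Real.sin (n * t) * Real.cos t| + |Real.cos (n * t) * Real.sin t| := abs_add_le _ _
        _ = _ := by rw [abs_mul, abs_mul]
    have h2 := Real.abs_cos_le_one t
    have h3 := Real.abs_cos_le_one ((n : ℝ) * t)
    have h4 := abs_nonneg (Real.sin ((n : ℝ) * t))
    have h5 := abs_nonneg (Real.sin t)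
    nlinarith

lemma one_sub_cos_int_mul_le (z : ℤ) (t : ℝ) :
    1 - Real.cos (z * t) ≤ (z : ℝ) ^ 2 * (1 - Real.cos t) := by
  have hcast : ((z.natAbs : ℝ)) = |(z : ℝ)| := by
    simp [Nat.cast_natAbs]
  have hz : ((z : ℝ)) = (z.natAbs : ℝ) ∨ ((z : ℝ)) = -(z.natAbs : ℝ) := by
    rw [hcast]
    rcases abs_choice ((z : ℝ)) with h | h
    · left; rw [h]
    · right; rw [h]; ring
  set n := z.natAbs with hn
  have hcos : Real.cos (z * t) = Real.cos ((n : ℝ) * t) := by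
    rcases hz with h | h
    · rw [h]
    · rw [h, neg_mul, Real.cos_neg]
  have hsq : ((z : ℝ)) ^ 2 = ((n : ℝ)) ^ 2 := by
    rcases hz with h | h <;> rw [h] <;> ring
  rw [hcos, hsq]
  have h1 : 2 * Real.sin ((n : ℝ) * t / 2) ^ 2 = 1 - Real.cos ((n : ℝ) * t) := by
    have := Real.sin_sq_eq_half_sub ((n : ℝ) * t / 2)
    rw [this]; ring_nf
  have h2 : 2 * Real.sin (t / 2) ^ 2 = 1 - Real.cos t := by
    have := Real.sin_sq_eq_half_sub (t / 2)
    rw [this]; ring_nf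
  rw [← h1, ← h2]
  have key := abs_sin_nat_mul_le n (t / 2)
  have hs : Real.sin ((n : ℝ) * t / 2) ^ 2 ≤ ((n:ℝ) * |Real.sin (t/2)|) ^ 2 := by
    have h' : (n : ℝ) * t / 2 = n * (t / 2) := by ring
    rw [h', ← sq_abs]
    exact pow_le_pow_left₀ (abs_nonneg _) key 2
  nlinarith [hs, sq_abs (Real.sin (t/2))]

theorem stmt_1 (σ : ℝ) (ν : Measure ℝ) [IsFiniteMeasure ν]
    (f : ℝ → ℝ)
    (hf : ∀ x : ℝ, f x = (1 / 2) * σ ^ 2 * x ^ 2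
      + 2 * ∫ s in Set.Ioi (0 : ℝ), (1 - Real.cos (x * s)) ∂ν) :
    ∀ (z : ℤ) (x : ℝ), f (z * x) ≤ (z : ℝ) ^ 2 * f x := by
  intro z x
  rw [hf, hf]
  have hInt : ∀ c : ℝ, Integrable (fun s : ℝ => 1 - Real.cos (c * s))
      (ν.restrict (Set.Ioi 0)) := by
    intro c
    apply Integrable.mono' (integrable_const 2)
    · exact (Continuous.aestronglyMeasurable (by continuity))
    · filter_upwards with s
      have h1 := Real.neg_one_le_cos (c * s)
      have h2 := Real.cos_le_one (c * s)
      rw [Real.norm_eq_abs, abs_le]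
      constructor <;> linarith
  have hmono : ∫ s in Set.Ioi (0:ℝ), (1 - Real.cos (z * x * s)) ∂ν
      ≤ (z : ℝ) ^ 2 * ∫ s in Set.Ioi (0:ℝ), (1 - Real.cos (x * s)) ∂ν := by
    rw [← integral_const_mul]
    apply integral_mono (hInt _) ((hInt x).const_mul _)
    intro s
    have := one_sub_cos_int_mul_le z (x * s)
    simpa [mul_assoc] using this
  nlinarith [hmono, sq_nonneg ((z:ℝ) * x)]
end

section
/- Let f(x) = (1/2)σ²x² + 2∫₀^∞ (1 - cos(xs)) ν(ds) with σ ∈ ℝ and ν a finite positive measure on (0,∞). If f(z) = 0 for some z > 0, then σ = 0, ν is supported on the set {2πj/z : j ∈ ℤ₊}, and f is periodic with period z, i.e., f(x + z) = f(x) for all x ∈ ℝ. -/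
open MeasureTheory Real

theorem stmt_3 (σ : ℝ) (ν : Measure ℝ) [IsFiniteMeasure ν]
    (f : ℝ → ℝ)
    (hf : ∀ x : ℝ, f x = (1 / 2) * σ ^ 2 * x ^ 2
      + 2 * ∫ s in Set.Ioi (0 : ℝ), (1 - Real.cos (x * s)) ∂ν)
    (z : ℝ) (hz : 0 < z) (hfz : f z = 0) :
    σ = 0 ∧
    ν (Set.Ioi (0 : ℝ) \ {s : ℝ | ∃ j : ℤ, 0 < j ∧ s = 2 * π * (j : ℝ) / z}) = 0 ∧
    ∀ x : ℝ, f (x + z) = f x := by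
  have hπ := Real.pi_pos
  set g : ℝ → ℝ := fun s => 1 - Real.cos (z * s) with hg
  have hgmeas : Measurable g := by fun_prop
  have hgint : IntegrableOn g (Set.Ioi 0) ν := by
    apply Integrable.mono' (integrable_const 2) hgmeas.aestronglyMeasurable.restrict
    filter_upwards with s
    rw [Real.norm_eq_abs, abs_le]
    constructor <;> simp [hg] <;>
      nlinarith [Real.neg_one_le_cos (z * s), Real.cos_le_one (z * s)]
  have hnn : 0 ≤ (1 / 2) * σ ^ 2 * z ^ 2 := by positivity
  have hInn : 0 ≤ ∫ s in Set.Ioi (0 : ℝ), g s ∂ν := by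
    apply setIntegral_nonneg measurableSet_Ioi
    intro s _
    simp only [hg, sub_nonneg]
    exact Real.cos_le_one _
  have hfz' := hfz
  rw [hf z] at hfz'
  have hI0 : ∫ s in Set.Ioi (0 : ℝ), g s ∂ν = 0 := by nlinarith
  have hq0 : (1 / 2) * σ ^ 2 * z ^ 2 = 0 := by nlinarith
  have hσ : σ = 0 := by
    have hσ2 : σ ^ 2 = 0 := by nlinarith [pow_pos hz 2]
    exact (pow_eq_zero_iff two_ne_zero).mp hσ2
  have hae0 : 0 ≤ᵐ[ν.restrict (Set.Ioi 0)] g := by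
    filter_upwards with s
    simp only [hg, Pi.zero_apply, sub_nonneg]
    exact Real.cos_le_one _
  have hae : g =ᵐ[ν.restrict (Set.Ioi 0)] 0 :=
    (setIntegral_eq_zero_iff_of_nonneg_ae hae0 hgint).mp hI0
  refine ⟨hσ, ?_, ?_⟩
  · have haeS : ∀ᵐ s ∂ν.restrict (Set.Ioi 0),
        s ∈ {s : ℝ | ∃ j : ℤ, 0 < j ∧ s = 2 * π * (j : ℝ) / z} := by
      filter_upwards [hae, ae_restrict_mem (measurableSet_Ioi : MeasurableSet (Set.Ioi (0:ℝ)))]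
        with s hs hs0
      have hcos : Real.cos (z * s) = 1 := by
        have : g s = 0 := hs
        simp only [hg] at this
        linarith
      obtain ⟨n, hn⟩ := (Real.cos_eq_one_iff _).mp hcos
      have hzs : 0 < z * s := mul_pos hz hs0
      have hnpos : (0 : ℝ) < (n : ℝ) := by nlinarith
      refine ⟨n, by exact_mod_cast hnpos, ?_⟩
      field_simp
      linarith [hn]
    have := ae_iff.mp haeS
    rw [Measure.restrict_apply' measurableSet_Ioi] at this
    convert this using 2
    ext s
    simp only [Set.mem_diff, Set.mem_inter_iff, Set.mem_setOf_eq, Set.mem_Ioi]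
    tauto
  · intro x
    rw [hf, hf, hσ]
    have hint : ∫ s in Set.Ioi (0 : ℝ), (1 - Real.cos ((x + z) * s)) ∂ν
        = ∫ s in Set.Ioi (0 : ℝ), (1 - Real.cos (x * s)) ∂ν := by
      apply integral_congr_ae
      filter_upwards [hae] with s hs
      have hcos : Real.cos (z * s) = 1 := by
        have : g s = 0 := hs
        simp only [hg] at this
        linarith
      have hsin : Real.sin (z * s) = 0 := by
        nlinarith [Real.sin_sq_add_cos_sq (z * s)]
      have hrw : (x + z) * s = x * s + z * s := by ring
      rw [hrw, Real.cos_add, hcos, hsin]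
      ring
    rw [hint]
    ring
end

section
/- For every integer w ≥ 1 and every integer x, one has Σ_{j=1}^{2^w - 1} ((2^{2τ(j)+1} + 1)/(3·2^{2w-1}))·(1 - cos(2πjx/2^w)) = g_{np,w}(x), where τ(j) is the exponent of 2 in j, g_{np,w}(x) = 2^{-τ(x)} if 2^w ∤ x and g_{np,w}(x) = 0 if 2^w ∣ x. -/
/-! Both sides satisfy the same recursion in `w`. Splitting `j < 2^(w+1)` into even and odd
indices, the weights obey `weight (w+1) (2i) = weight w i - 1/(2·4^w)` and
`weight (w+1) (2i+1) = 1/(2·4^w)` (the `i = 0` term does not matter since its cosine factor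
vanishes), so by the orthogonality relation `∑_{j<n} cos(2πjx/n) = n·[n ∣ x]` the sum grows
from `w` to `w+1` by `2^(-w)` exactly when `2^w ∣ x` and `2^(w+1) ∤ x`, which is also how
`gnp` grows. At `w = 0` both sides vanish. -/

open Real

/-- `gnp w x` is the `2^w`-periodic version of the nearly periodic function
`x ↦ 2^{-τ(x)}`, where `τ` is the 2-adic valuation. -/
noncomputable def gnp (w : ℕ) (x : ℤ) : ℝ :=
  if (2 : ℤ) ^ w ∣ x then 0 else (2 : ℝ) ^ (-(padicValInt 2 x : ℤ))

open Finset

theorem sum_range_cos_two_pi_mul_div (n : ℕ) (x : ℤ) :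
    ∑ j ∈ range n, cos (2 * π * j * x / n) = if (n : ℤ) ∣ x then (n : ℝ) else 0 := by
  rcases Nat.eq_zero_or_pos n with rfl | hn
  · simp
  have hn' : (n : ℝ) ≠ 0 := by positivity
  split_ifs with hdvd
  · obtain ⟨k, rfl⟩ := hdvd
    have hterm (j : ℕ) : cos (2 * π * j * ((n * k : ℤ) : ℝ) / n) = 1 := by
      rw [show 2 * π * j * ((n * k : ℤ) : ℝ) / n = ((j * k : ℤ) : ℝ) * (2 * π) by
        push_cast; field_simp]
      exact cos_int_mul_two_pi _
    rw [sum_congr rfl fun j _ ↦ hterm j]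
    simp
  · set z : ℂ := Complex.exp ((2 * π * x / n : ℝ) * Complex.I)
    have hpow (j : ℕ) : z ^ j = Complex.exp ((2 * π * j * x / n : ℝ) * Complex.I) := by
      rw [← Complex.exp_nat_mul]; push_cast; ring_nf
    have hz_pow : z ^ n = 1 := by
      rw [hpow, show 2 * π * n * x / n = (x : ℝ) * (2 * π) by field_simp]
      push_cast
      rw [mul_assoc]
      exact Complex.exp_int_mul_two_pi_mul_I x
    have hz_ne : z ≠ 1 := by
      rw [Ne, Complex.exp_eq_one_iff]
      rintro ⟨m, hm⟩
      have hm' : 2 * π * x / n = m * (2 * π) := by simpa using congrArg Complex.im hm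
      refine hdvd ⟨m, ?_⟩
      have hx : (x : ℝ) = n * m := by field_simp at hm'; linarith [pi_pos]
      exact_mod_cast hx
    calc ∑ j ∈ range n, cos (2 * π * j * x / n) = (∑ j ∈ range n, z ^ j).re := by
          simp only [Complex.re_sum, hpow, Complex.exp_ofReal_mul_I_re]
      _ = 0 := by rw [geom_sum_eq hz_ne, hz_pow, sub_self, zero_div, Complex.zero_re]

theorem sum_range_one_sub_cos_two_pi_mul_div (n : ℕ) (x : ℤ) :
    ∑ j ∈ range n, (1 - cos (2 * π * j * x / n))
      = if (n : ℤ) ∣ x then 0 else (n : ℝ) := by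
  rw [sum_sub_distrib, sum_range_cos_two_pi_mul_div]
  split_ifs <;> simp

theorem sum_range_one_sub_cos_two_pi_mul_div_two_pow (n : ℕ) (x : ℤ) :
    ∑ j ∈ range (2 ^ n), (1 - cos (2 * π * j * x / 2 ^ n))
      = if (2 : ℤ) ^ n ∣ x then 0 else (2 : ℝ) ^ n := by
  exact_mod_cast sum_range_one_sub_cos_two_pi_mul_div (2 ^ n) x

theorem Finset.sum_range_two_mul {M : Type*} [AddCommMonoid M] (n : ℕ) (f : ℕ → M) :
    ∑ j ∈ range (2 * n), f j
      = ∑ i ∈ range n, f (2 * i) + ∑ i ∈ range n, f (2 * i + 1) := by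
  induction n with
  | zero => simp
  | succ n ih =>
    rw [Nat.mul_succ, sum_range_succ, sum_range_succ, ih, sum_range_succ, sum_range_succ]
    abel

theorem padicValInt_eq_of_dvd_of_not_dvd {p : ℕ} [Fact p.Prime] {n : ℕ} {x : ℤ}
    (hdvd : (p : ℤ) ^ n ∣ x) (hndvd : ¬ (p : ℤ) ^ (n + 1) ∣ x) : padicValInt p x = n := by
  have hx : x ≠ 0 := by rintro rfl; exact hndvd (dvd_zero _)
  rw [padicValInt_dvd_iff] at hdvd hndvd
  omega

/-- The weight `(2^{2τ(j)+1} + 1) / (3·2^{2w-1})` of the statement, written as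
`2(2·4^{τ(j)} + 1) / (3·4^w)` to avoid the truncated subtraction `2w - 1` at `w = 0`. -/
noncomputable def weight (w j : ℕ) : ℝ := 2 * (2 * 4 ^ padicValNat 2 j + 1) / (3 * 4 ^ w)

theorem weight_two_mul (w : ℕ) {j : ℕ} (hj : j ≠ 0) :
    weight (w + 1) (2 * j) = weight w j - (2 * 4 ^ w)⁻¹ := by
  rw [weight, weight, padicValNat.mul two_ne_zero hj, padicValNat.self one_lt_two]
  field_simp
  ring

theorem weight_two_mul_add_one (w j : ℕ) : weight (w + 1) (2 * j + 1) = (2 * 4 ^ w)⁻¹ := by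
  rw [weight, padicValNat.eq_zero_of_not_dvd (by omega)]
  field_simp
  ring

theorem weight_eq {w : ℕ} (hw : w ≠ 0) (j : ℕ) :
    weight w j = (2 ^ (2 * padicValNat 2 j + 1) + 1 : ℝ) / (3 * 2 ^ (2 * w - 1)) := by
  obtain ⟨v, rfl⟩ := Nat.exists_eq_succ_of_ne_zero hw
  rw [weight, show 2 * (v + 1) - 1 = 2 * v + 1 by omega]
  simp only [pow_succ, pow_mul]
  norm_num
  field_simp
  ring

noncomputable def cosSeries (w : ℕ) (x : ℤ) : ℝ :=
  ∑ j ∈ range (2 ^ w), weight w j * (1 - cos (2 * π * j * x / 2 ^ w))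

theorem cosSeries_succ (w : ℕ) (x : ℤ) :
    cosSeries (w + 1) x
      = cosSeries w x + if 2 ^ w ∣ x ∧ ¬ 2 ^ (w + 1) ∣ x then (2 ^ w)⁻¹ else 0 := by
  set c : ℕ → ℕ → ℝ := fun w j ↦ 1 - cos (2 * π * j * x / 2 ^ w)
  have hcosSeries (w : ℕ) : cosSeries w x = ∑ j ∈ range (2 ^ w), weight w j * c w j := rfl
  have hc_even (i : ℕ) : c (w + 1) (2 * i) = c w i := by
    simp only [c, pow_succ]
    push_cast
    ring_nf
  have hc_split : ∑ j ∈ range (2 ^ (w + 1)), c (w + 1) j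
      = ∑ i ∈ range (2 ^ w), c w i + ∑ i ∈ range (2 ^ w), c (w + 1) (2 * i + 1) := by
    rw [pow_succ', sum_range_two_mul]
    simp only [hc_even]
  have h_even : ∑ i ∈ range (2 ^ w), weight (w + 1) (2 * i) * c w i
      = cosSeries w x - (2 * 4 ^ w)⁻¹ * ∑ i ∈ range (2 ^ w), c w i := by
    rw [hcosSeries, mul_sum, ← sum_sub_distrib]
    refine sum_congr rfl fun i _ ↦ ?_
    rcases eq_or_ne i 0 with rfl | hi
    · simp [c]
    · rw [weight_two_mul w hi]
      ring
  calc cosSeries (w + 1) x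
      = ∑ i ∈ range (2 ^ w), weight (w + 1) (2 * i) * c w i
          + ∑ i ∈ range (2 ^ w), weight (w + 1) (2 * i + 1) * c (w + 1) (2 * i + 1) := by
        rw [hcosSeries, pow_succ', sum_range_two_mul]
        simp only [hc_even]
    _ = cosSeries w x + (2 * 4 ^ w)⁻¹
          * (∑ j ∈ range (2 ^ (w + 1)), c (w + 1) j - 2 * ∑ i ∈ range (2 ^ w), c w i) := by
        rw [h_even, hc_split]
        simp only [weight_two_mul_add_one, ← mul_sum]
        ring
    _ = _ := by
        rw [sum_range_one_sub_cos_two_pi_mul_div_two_pow,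
          sum_range_one_sub_cos_two_pi_mul_div_two_pow]
        by_cases h1 : (2 : ℤ) ^ w ∣ x <;> by_cases h2 : (2 : ℤ) ^ (w + 1) ∣ x
        · simp [h1, h2]
        · simp only [h1, h2, true_and, not_false_eq_true, if_true, if_false]
          rw [show (4 : ℝ) ^ w = 2 ^ w * 2 ^ w by rw [← mul_pow]; norm_num]
          field_simp
          ring
        · exact absurd ((pow_dvd_pow 2 w.le_succ).trans h2) h1
        · simp only [h1, h2, false_and, if_false]
          ring

theorem gnp_succ (w : ℕ) (x : ℤ) :
    gnp (w + 1) x = gnp w x + if 2 ^ w ∣ x ∧ ¬ 2 ^ (w + 1) ∣ x then (2 ^ w)⁻¹ else 0 := by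
  by_cases h1 : (2 : ℤ) ^ w ∣ x <;> by_cases h2 : (2 : ℤ) ^ (w + 1) ∣ x
  · simp [gnp, h1, h2]
  · have hval : padicValInt 2 x = w := padicValInt_eq_of_dvd_of_not_dvd (p := 2) h1 h2
    simp [gnp, h1, h2, hval]
  · exact absurd ((pow_dvd_pow 2 w.le_succ).trans h2) h1
  · simp [gnp, h1, h2]

theorem cosSeries_eq_gnp (w : ℕ) (x : ℤ) : cosSeries w x = gnp w x := by
  induction w with
  | zero => simp [cosSeries, gnp]
  | succ w ih => rw [cosSeries_succ, gnp_succ, ih]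

theorem stmt_9_general (w : ℕ) (x : ℤ) :
    ∑ j ∈ Finset.Icc 1 (2 ^ w - 1),
      ((2 ^ (2 * padicValNat 2 j + 1) + 1 : ℝ) / (3 * 2 ^ (2 * w - 1))) *
        (1 - Real.cos (2 * π * (j : ℝ) * (x : ℝ) / 2 ^ w))
      = gnp w x := by
  rw [← cosSeries_eq_gnp, cosSeries, sum_range_eq_add_Ico _ (by positivity),
    ← Icc_sub_one_right_eq_Ico_of_not_isMin (not_isMin_of_lt (Nat.two_pow_pos w)),
    Nat.cast_zero, mul_zero, zero_mul, zero_div, cos_zero, sub_self, mul_zero, zero_add]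
  refine sum_congr rfl fun j hj ↦ ?_
  have hw : w ≠ 0 := by
    rintro rfl
    simp at hj
  rw [weight_eq hw]

theorem stmt_9 (w : ℕ) (hw : 1 ≤ w) (x : ℤ) :
    ∑ j ∈ Finset.Icc 1 (2 ^ w - 1),
      ((2 ^ (2 * padicValNat 2 j + 1) + 1 : ℝ) / (3 * 2 ^ (2 * w - 1))) *
        (1 - Real.cos (2 * π * (j : ℝ) * (x : ℝ) / 2 ^ w))
      = gnp w x :=
  stmt_9_general w x
end
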